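/- With the fixed bandwidth kernel K(x) = I, the conditional mean estimator satisfies the identity m(x;ε) = x + ε ∇_x log Π(x;ε) for all x ∈ ℝ^d, where Π(x;ε) := (Σ_{i=1}^M v_i t_i(x))², i.e. the drift (m(x;ε) − x)/ε is the gradient of the logarithm of the squared weighted kernel sum. -/

import Mathlib

/-!
Writing `S = ∑ i, v i * t i`, the chain rule gives `∇ log (S ^ 2) = (2 / S) • ∇ S`, and each
Gaussian has gradient `∇ t i = -(t i / (2 ε)) • (x - X i)`. Hence `ε • ∇ log (S ^ 2)` is the
`p`-weighted mean of the displacements `X i - x`, which equals `m - x` because the weights `p i`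
sum to one.
-/

open Finset

section Gradient

variable {F : Type*} [NormedAddCommGroup F] [InnerProductSpace ℝ F] [CompleteSpace F]
  {f : F → ℝ} {g x : F}

theorem HasGradientAt.fun_sum {ι : Type*} {s : Finset ι} {f : ι → F → ℝ} {g : ι → F}
    (h : ∀ i ∈ s, HasGradientAt (f i) (g i) x) :
    HasGradientAt (fun y => ∑ i ∈ s, f i y) (∑ i ∈ s, g i) x := by
  rw [hasGradientAt_iff_hasFDerivAt, map_sum]
  exact HasFDerivAt.fun_sum fun i hi => (h i hi).hasFDerivAt

theorem HasGradientAt.const_mul (c : ℝ) (h : HasGradientAt f g x) :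
    HasGradientAt (fun y => c * f y) (c • g) x := by
  rw [hasGradientAt_iff_hasFDerivAt, map_smul]
  exact h.hasFDerivAt.const_mul c

theorem HasDerivAt.comp_hasGradientAt {φ : ℝ → ℝ} {φ' : ℝ} (hφ : HasDerivAt φ φ' (f x))
    (hf : HasGradientAt f g x) : HasGradientAt (fun y => φ (f y)) (φ' • g) x := by
  rw [hasGradientAt_iff_hasFDerivAt, map_smul]
  exact hφ.comp_hasFDerivAt x hf.hasFDerivAt

theorem hasGradientAt_norm_sub_sq (a : F) :
    HasGradientAt (fun y => ‖y - a‖ ^ 2) ((2 : ℝ) • (x - a)) x := by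
  rw [hasGradientAt_iff_hasFDerivAt]
  exact ((hasFDerivAt_id x).sub_const a).norm_sq.congr_fderiv (by ext y; simp)

theorem hasGradientAt_exp_neg_norm_sub_sq_div (a : F) (c : ℝ) :
    HasGradientAt (fun y => Real.exp (-‖y - a‖ ^ 2 / c))
      ((-(2 / c) * Real.exp (-‖x - a‖ ^ 2 / c)) • (x - a)) x := by
  have hφ : HasDerivAt (fun s => Real.exp (-s / c)) (Real.exp (-‖x - a‖ ^ 2 / c) * (-1 / c))
      (‖x - a‖ ^ 2) := by
    simpa using ((hasDerivAt_id (‖x - a‖ ^ 2)).neg.div_const c).exp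
  convert hφ.comp_hasGradientAt (f := fun y => ‖y - a‖ ^ 2) (hasGradientAt_norm_sub_sq a) using 1
  rw [smul_smul]
  congr 1
  ring

end Gradient

theorem Real.hasDerivAt_log_sq {x : ℝ} (hx : x ≠ 0) :
    HasDerivAt (fun s => Real.log (s ^ 2)) (2 / x) x := by
  convert (hasDerivAt_pow 2 x).log (pow_ne_zero 2 hx) using 1
  field_simp
  norm_num

theorem Finset.sum_div_sum_smul_eq_add {ι E : Type*} [AddCommGroup E] [Module ℝ E]
    {s : Finset ι} (w : ι → ℝ) (hw : ∑ i ∈ s, w i ≠ 0) (X : ι → E) (x : E) :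
    ∑ i ∈ s, (w i / ∑ j ∈ s, w j) • X i = x + ∑ i ∈ s, (w i / ∑ j ∈ s, w j) • (X i - x) := by
  simp only [smul_sub, sum_sub_distrib, ← sum_smul, ← sum_div, div_self hw, one_smul]
  abel

/-- Lemma 3 of the paper: with fixed bandwidth kernel `K = I`, the conditional mean
estimator satisfies `m(x;ε) = x + ε ∇ log Π(x;ε)` where `Π(x;ε) = (∑ i, v_i t_i(x))²`. -/
theorem conditional_mean_eq_gradient_log
    (d M : ℕ) (hM : 0 < M) (ε : ℝ) (hε : 0 < ε)
    (X : Fin M → EuclideanSpace ℝ (Fin d)) (v : Fin M → ℝ) (hv : ∀ i, 0 < v i)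
    (x : EuclideanSpace ℝ (Fin d)) :
    (∑ i, (v i * Real.exp (-‖x - X i‖ ^ 2 / (4 * ε)) /
        ∑ j, v j * Real.exp (-‖x - X j‖ ^ 2 / (4 * ε))) • X i)
      = x + ε • gradient
          (fun y => Real.log ((∑ i, v i * Real.exp (-‖y - X i‖ ^ 2 / (4 * ε))) ^ 2)) x := by
  set S := fun y => ∑ i, v i * Real.exp (-‖y - X i‖ ^ 2 / (4 * ε))
  have hS : 0 < S x :=
    sum_pos (fun i _ => mul_pos (hv i) (Real.exp_pos _)) (univ_nonempty_iff.2 ⟨⟨0, hM⟩⟩)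
  have hgradS : HasGradientAt S _ x := HasGradientAt.fun_sum fun i _ =>
    (hasGradientAt_exp_neg_norm_sub_sq_div (X i) (4 * ε)).const_mul (v i)
  have hgradLog := (Real.hasDerivAt_log_sq hS.ne').comp_hasGradientAt hgradS
  rw [hgradLog.gradient, sum_div_sum_smul_eq_add _ hS.ne' _ x, smul_smul, smul_sum,
    show ∑ j, v j * Real.exp (-‖x - X j‖ ^ 2 / (4 * ε)) = S x from rfl]
  congr 1
  refine sum_congr rfl fun i _ => ?_
  match_scalars <;> field_simp <;> ring
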